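/- For every ideal I on a countable set, the following are equivalent: (a) Fin'_ω ⊑ I; (b) Fin'_ω ≤_K I; (c) Fin^{n+1} ⊑ I for all n ∈ ω; (d) Fin^{n+1} ≤_K I for all n ∈ ω. -/

import Mathlib

/-- An ideal on a set `X`: a family of subsets of `X` closed under subsets and
finite unions, containing all finite sets, and proper. -/
structure IdealOn (X : Type*) where
  sets : Set (Set X)
  subset_mem : ∀ ⦃A B : Set X⦄, A ∈ sets → B ⊆ A → B ∈ sets
  union_mem : ∀ ⦃A B : Set X⦄, A ∈ sets → B ∈ sets → A ∪ B ∈ sets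
  finite_mem : ∀ A : Set X, A.Finite → A ∈ sets
  univ_not_mem : Set.univ ∉ sets

/-- The dual filter of an ideal: the family of complements of its members. -/
def IdealOn.dual {X : Type*} (I : IdealOn X) : Set (Set X) := (·ᶜ) '' I.sets

/-- `FinPow n` is the Fubini power `Fin^{n+1}` of the ideal of finite sets, an
ideal on `ω^{n+1}` (represented as `Fin (n+1) → ℕ`). -/
def FinPow : (n : ℕ) → Set (Set (Fin (n + 1) → ℕ))
  | 0 => {A | A.Finite}
  | n + 1 => {A | {k : ℕ | {y : Fin (n + 1) → ℕ | Fin.cons k y ∈ A} ∉ FinPow n}.Finite}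

/-- Projection of `ω^n` onto the last `m` coordinates. -/
def lastProj {m n : ℕ} (h : m ≤ n) (x : Fin n → ℕ) : Fin m → ℕ :=
  fun k => x ⟨n - m + k.val, by have := k.isLt; omega⟩

/-- The inductive limit `Fin_ω` of the Fubini powers `(Fin^n)_{n>0}` along the
projections onto the last coordinates. -/
def FinOmega : Set (Set (Σ n : ℕ, Fin (n + 1) → ℕ)) :=
  {M | ∃ m : ℕ, ∃ P : Set (Fin (m + 1) → ℕ), Pᶜ ∈ FinPow m ∧
    ∀ (n : ℕ) (h : m ≤ n), ∀ x : Fin (n + 1) → ℕ,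
      lastProj (Nat.succ_le_succ h) x ∈ P → (⟨n, x⟩ : Σ n : ℕ, Fin (n + 1) → ℕ) ∉ M}

/-- A system of partitions `{X_s : s ∈ ω^{n+1}}` of `ω` into infinite sets,
with all finite cross-intersections infinite. -/
structure PartitionSystem (X : (n : ℕ) → (Fin (n + 1) → ℕ) → Set ℕ) : Prop where
  infinite : ∀ n s, (X n s).Infinite
  disjoint : ∀ (n : ℕ) (s t : Fin (n + 1) → ℕ), s ≠ t → Disjoint (X n s) (X n t)
  cover : ∀ n : ℕ, (⋃ s, X n s) = Set.univ
  cross : ∀ (F : Finset ℕ) (s : ∀ i : ℕ, Fin (i + 1) → ℕ),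
    (⋂ i ∈ F, X i (s i)).Infinite

/-- The copy `Fin^{n+2}({X_s : s ∈ ω^{n+1}})` on `ω` of the Fubini power,
with partition pieces `X s`. -/
def FinPowCopy {n : ℕ} (X : (Fin (n + 1) → ℕ) → Set ℕ) : Set (Set ℕ) :=
  {A | {s : Fin (n + 1) → ℕ | ¬ (A ∩ X s).Finite} ∈ FinPow n}

/-- `Fin'_ω`: the ideal on `ω` generated by `⋃ n, Fin^{n+2}({X_s : s ∈ ω^{n+1}})`. -/
def FinOmega' (X : (n : ℕ) → (Fin (n + 1) → ℕ) → Set ℕ) : Set (Set ℕ) :=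
  {A | ∃ F : Finset ℕ, ∃ B : ℕ → Set ℕ,
    (∀ n ∈ F, B n ∈ FinPowCopy (X n)) ∧ A ⊆ ⋃ n ∈ F, B n}

/-!
(a) ⇒ (b) and (c) ⇒ (d) are trivial. For (b) ⇒ (d), compose a Katětov reduction of `Fin'_ω` with
the index map `m ↦ s` of the partition `{X_s : s ∈ ω^{n+1}}`.

For (d) ⇒ (c), a Katětov reduction `f` of `Fin^{n+3}` makes `init ∘ f` a reduction of the Fubini
product `Fin^{n+2} ⊗ Fin`. Its range is infinite, so it contains an infinite `Fin^{n+2}`-small set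
`S`; spreading `S` over the whole space by an infinite-to-one map keeps the reduction and makes
all fibres infinite. The modified reduction can be matched fibre by fibre with the map collapsing
the last coordinate through `Nat.unpair`; since that map preserves the other coordinates, a
`Fin^{n+2}`-small set meets only a `Fin^{n+2}`-small set of its fibres in infinitely many points,
so the resulting bijection reduces `Fin^{n+2}`. (`Fin^1 ⊑ I` holds for every ideal `I` on a countable set.)

For (c) ⇒ (a), fix bijective reductions `w_n` and an infinite `I`-small set `R`. Enumerate `Rᶜ` as
`y_0, y_1, …` and send `y_j` into `⋂_{i ≤ j} X_i(init (w_{i+1} y_j))`, which is infinite by the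
cross-intersection property, leaving infinitely many gaps to be filled by `R`. Off an `I`-small
set, each `y` then lands in the piece of level `n` indexed by `init (w_{n+1} y)`, so a member of
`Fin^{n+2}({X_s})` pulls back to a set with finite fibres over `init ∘ w_{n+1}` outside a
`Fin^{n+1}`-small set, which lies in `I`.
-/

open Set Function

theorem finPow_mono : ∀ {n : ℕ} {A B : Set (Fin (n + 1) → ℕ)}, A ∈ FinPow n → B ⊆ A → B ∈ FinPow n
  | 0, _, _, hA, hBA => hA.subset hBA
  | _ + 1, _, _, hA, hBA => hA.subset fun _ hk h => hk (finPow_mono h fun _ hy => hBA hy)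

theorem finPow_union : ∀ {n : ℕ} {A B : Set (Fin (n + 1) → ℕ)},
    A ∈ FinPow n → B ∈ FinPow n → A ∪ B ∈ FinPow n
  | 0, _, _, hA, hB => hA.union hB
  | _ + 1, _, _, hA, hB => (hA.union hB).subset fun _ hk => by
      by_contra h
      simp only [mem_union, mem_ofPred_eq, not_or, not_not] at h
      exact hk (finPow_union h.1 h.2)

theorem finPow_of_finite : ∀ {n : ℕ} {A : Set (Fin (n + 1) → ℕ)}, A.Finite → A ∈ FinPow n
  | 0, _, hA => hA
  | _ + 1, _, hA => finite_empty.subset fun k hk =>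
      hk (finPow_of_finite (hA.preimage (Fin.cons_right_injective (α := fun _ => ℕ) k).injOn))

theorem univ_not_mem_finPow : ∀ n : ℕ, (univ : Set (Fin (n + 1) → ℕ)) ∉ FinPow n
  | 0 => infinite_univ
  | n + 1 => fun h => infinite_univ (h.subset fun _ _ => univ_not_mem_finPow n)

def finPowIdeal (n : ℕ) : IdealOn (Fin (n + 1) → ℕ) where
  sets := FinPow n
  subset_mem _ _ := finPow_mono
  union_mem _ _ := finPow_union
  finite_mem _ := finPow_of_finite
  univ_not_mem := univ_not_mem_finPow n

theorem finPow_succ_iff_snoc : ∀ {n : ℕ} {A : Set (Fin (n + 2) → ℕ)},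
    A ∈ FinPow (n + 1) ↔ {x | {j | Fin.snoc x j ∈ A}.Infinite} ∈ FinPow n
  | 0, A => by
    let e := Equiv.funUnique (Fin 1) ℕ
    have hsnoc (x : Fin 1 → ℕ) (j : ℕ) :
        (Fin.snoc x j : Fin 2 → ℕ) = Fin.cons (e x) (e.symm j) := by
      ext i; fin_cases i <;> rfl
    have hfiber (k : ℕ) : {y | Fin.cons k y ∈ A} = e.symm '' {j | Fin.cons k (e.symm j) ∈ A} := by
      rw [e.image_symm_eq_preimage]; ext y; simp
    change {k | ¬ {y | Fin.cons k y ∈ A}.Finite}.Finite ↔ _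
    simp only [hfiber, finite_image_iff e.symm.injective.injOn, hsnoc]
    change _ ↔ (e ⁻¹' {k | ¬{j | Fin.cons k (e.symm j) ∈ A}.Finite}).Finite
    rw [← e.image_symm_eq_preimage, finite_image_iff e.symm.injective.injOn]
  | n + 1, A => by
    change {k | {y | Fin.cons k y ∈ A} ∉ FinPow (n + 1)}.Finite ↔
      {k | {y | Fin.cons k y ∈ {x | {j | Fin.snoc x j ∈ A}.Infinite}} ∉ FinPow n}.Finite
    simp only [finPow_succ_iff_snoc, mem_ofPred_eq, Fin.cons_snoc_eq_snoc_cons]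

theorem finPow_preimage_init {n : ℕ} {A : Set (Fin (n + 1) → ℕ)} (hA : A ∈ FinPow n) :
    Fin.init ⁻¹' A ∈ FinPow (n + 1) :=
  finPow_succ_iff_snoc.2 <| finPow_mono hA fun x hx => by
    obtain ⟨_, hj⟩ := hx.nonempty
    rwa [mem_ofPred_eq, mem_preimage, Fin.init_snoc] at hj

theorem exists_infinite_subset_mem_finPow {n : ℕ} {S : Set (Fin (n + 2) → ℕ)} (hS : S.Infinite) :
    ∃ T ⊆ S, T.Infinite ∧ T ∈ FinPow (n + 1) := by
  by_cases h : ∃ x, {j | Fin.snoc x j ∈ S}.Infinite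
  · obtain ⟨x, hx⟩ := h
    refine ⟨S ∩ Fin.init ⁻¹' {x}, inter_subset_left,
      (hx.image (Fin.snoc_right_injective x).injOn).mono ?_,
      finPow_mono (finPow_preimage_init (finPow_of_finite (finite_singleton x))) inter_subset_right⟩
    rintro _ ⟨j, hj, rfl⟩
    exact ⟨hj, Fin.init_snoc _ _⟩
  · simp only [not_exists, not_infinite] at h
    refine ⟨S, subset_rfl, hS, finPow_succ_iff_snoc.2 (finPow_of_finite ?_)⟩
    exact finite_empty.subset fun x hx => hx (h x)

def collapseLast {n : ℕ} (x : Fin (n + 1) → ℕ) : Fin (n + 1) → ℕ :=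
  Fin.snoc (Fin.init x) (Nat.unpair (x (Fin.last n))).1

theorem init_collapseLast {n : ℕ} (x : Fin (n + 1) → ℕ) : Fin.init (collapseLast x) = Fin.init x :=
  Fin.init_snoc _ _

theorem collapseLast_fiber_infinite {n : ℕ} (z : Fin (n + 1) → ℕ) :
    (collapseLast ⁻¹' {z}).Infinite := by
  refine infinite_of_injective_forall_mem
    (f := fun j => (Fin.snoc (Fin.init z) (Nat.pair (z (Fin.last n)) j) : Fin (n + 1) → ℕ))
    (fun i j h => (Nat.pair_eq_pair.1 (Fin.snoc_right_injective _ h)).2) fun j => ?_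
  simp [collapseLast, Fin.init_snoc, Fin.snoc_last, Fin.snoc_init_self]

theorem finPow_infinite_fibers_of_init {n : ℕ} {ψ : (Fin (n + 1) → ℕ) → Fin (n + 1) → ℕ}
    (hψ : ∀ x, Fin.init (ψ x) = Fin.init x) {A : Set (Fin (n + 1) → ℕ)} (hA : A ∈ FinPow n) :
    {z | (A ∩ ψ ⁻¹' {z}).Infinite} ∈ FinPow n := by
  cases n with
  | zero => exact finite_empty.subset fun z hz => hz (hA.subset inter_subset_left)
  | succ n =>
    rw [finPow_succ_iff_snoc] at hA ⊢
    refine finPow_mono hA fun u hu => ?_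
    obtain ⟨i, hi⟩ := hu.nonempty
    refine Infinite.of_image (Fin.snoc u) (hi.mono ?_)
    rintro x ⟨hxA, hx⟩
    have hxu : Fin.init x = u := by rw [← hψ x, mem_preimage.1 hx, Fin.init_snoc]
    exact ⟨x (Fin.last _), by rwa [mem_ofPred_eq, ← hxu, Fin.snoc_init_self],
      by rw [← hxu, Fin.snoc_init_self]⟩

theorem IdealOn.infinite {Y : Type*} (I : IdealOn Y) : Infinite Y :=
  not_finite_iff_infinite.1 fun _ => I.univ_not_mem (I.finite_mem _ finite_univ)

theorem IdealOn.biUnion_mem {Y ι : Type*} (I : IdealOn Y) (N : Finset ι) {S : ι → Set Y}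
    (hS : ∀ i ∈ N, S i ∈ I.sets) : (⋃ i ∈ N, S i) ∈ I.sets := by
  classical
  induction N using Finset.induction_on with
  | empty => simpa using I.finite_mem ∅ finite_empty
  | insert i N _ ih =>
    rw [Finset.set_biUnion_insert]
    exact I.union_mem (hS i (Finset.mem_insert_self i N))
      (ih fun j hj => hS j (Finset.mem_insert_of_mem hj))

theorem exists_injective_mem_coinfinite {C : ℕ → Set ℕ} (hC : ∀ j, (C j).Infinite) :
    ∃ v : ℕ → ℕ, Injective v ∧ (∀ j, v j ∈ C j) ∧ (range v)ᶜ.Infinite := by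
  choose pick hpick using fun j b => (hC j).exists_gt b
  let v : ℕ → ℕ := fun j => Nat.rec (pick 0 0) (fun j vj => pick (j + 1) (vj + 1)) j
  have hgap (j : ℕ) : v j + 1 < v (j + 1) := (hpick (j + 1) (v j + 1)).2
  have hv : StrictMono v := strictMono_nat_of_lt_succ fun j => (hgap j).trans' (Nat.lt_succ_self _)
  refine ⟨v, hv.injective, fun j => ?_, infinite_of_forall_exists_gt fun a => ⟨v a + 1, ?_, ?_⟩⟩
  · cases j with
    | zero => exact (hpick 0 0).1
    | succ j => exact (hpick (j + 1) (v j + 1)).1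
  · rintro ⟨i, hi⟩
    rcases lt_or_ge a i with h | h
    · exact (hgap a).not_ge (hi ▸ hv.monotone h)
    · exact (hv.monotone h).not_gt (hi ▸ Nat.lt_succ_self _)
  · exact Nat.lt_succ_of_le (hv.le_apply)

theorem exists_equiv_extend {α Y Z : Type*} [Countable Y] [Countable Z] {a : α → Y} {v : α → Z}
    (ha : Injective a) (hv : Injective v) (ha' : (range a)ᶜ.Infinite) (hv' : (range v)ᶜ.Infinite) :
    ∃ F : Y ≃ Z, ∀ x, F (a x) = v x := by
  classical
  have := ha'.to_subtype
  have := hv'.to_subtype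
  obtain ⟨e⟩ : Nonempty (↥(range a)ᶜ ≃ ↥(range v)ᶜ) := nonempty_equiv_of_countable
  refine ⟨(Equiv.Set.sumCompl (range a)).symm.trans <|
    (Equiv.sumCongr ((Equiv.ofInjective a ha).symm.trans (Equiv.ofInjective v hv)) e).trans
      (Equiv.Set.sumCompl (range v)), fun x => ?_⟩
  simp [Equiv.Set.sumCompl_symm_apply_of_mem (mem_range_self x)]

section Reductions

variable {Y Z W : Type*}

def IsKatetovReduction (J : Set (Set Z)) (I : IdealOn Y) (f : Y → Z) : Prop :=
  ∀ A ∈ J, f ⁻¹' A ∈ I.sets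

/-- `φ` is a Katětov reduction of the Fubini product `J ⊗ Fin` to `I`, a set `L ⊆ Y` being read as
a subset of the graph of `φ`. -/
def IsFubiniFinReduction (J : IdealOn Z) (I : IdealOn Y) (φ : Y → Z) : Prop :=
  ∀ L : Set Y, {z | (L ∩ φ ⁻¹' {z}).Infinite} ∈ J.sets → L ∈ I.sets

theorem IsFubiniFinReduction.of_katetov_succ {n : ℕ} {I : IdealOn Y} {w : Y → Fin (n + 2) → ℕ}
    (hw : IsKatetovReduction (FinPow (n + 1)) I w) :
    IsFubiniFinReduction (finPowIdeal n) I (Fin.init ∘ w) := by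
  intro L hL
  refine I.subset_mem (hw (w '' L) ?_) (subset_preimage_image w L)
  refine finPow_succ_iff_snoc.2 (finPow_mono hL fun x hx hfin => hx ?_)
  refine ((hfin.image w).preimage (Fin.snoc_right_injective x).injOn).subset ?_
  rintro j ⟨y, hyL, hy⟩
  exact ⟨y, ⟨hyL, by simp [hy, Fin.init_snoc]⟩, hy⟩

variable {J : IdealOn Z} {I : IdealOn Y} {φ : Y → Z}

theorem IsFubiniFinReduction.range_not_mem (hφ : IsFubiniFinReduction J I φ) :
    range φ ∉ J.sets := fun h =>
  I.univ_not_mem <| hφ univ <| J.subset_mem h fun _ hz => by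
    obtain ⟨y, -, hy⟩ := hz.nonempty
    exact ⟨y, hy⟩

theorem IsFubiniFinReduction.comp (hφ : IsFubiniFinReduction J I φ) {ρ : Z → Z}
    (hρ : ∀ T ∈ J.sets, ρ ⁻¹' T ∈ J.sets) : IsFubiniFinReduction J I (ρ ∘ φ) :=
  fun L hL => hφ L <| J.subset_mem (hρ _ hL) fun z (hz : (L ∩ φ ⁻¹' {z}).Infinite) =>
    show (L ∩ (ρ ∘ φ) ⁻¹' {ρ z}).Infinite from hz.mono fun _ hy => ⟨hy.1, congrArg ρ hy.2⟩

theorem IsFubiniFinReduction.preimage_mem (hφ : IsFubiniFinReduction J I φ) {G : Y → W}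
    (hG : Injective G) {P : Z → Set W} {E : Set Y} (hE : E ∈ I.sets)
    (hGP : ∀ y ∉ E, G y ∈ P (φ y)) {A : Set W} (hA : {z | (A ∩ P z).Infinite} ∈ J.sets) :
    G ⁻¹' A ∈ I.sets := by
  refine I.subset_mem (I.union_mem hE (hφ (G ⁻¹' A \ E) ?_)) fun y hy => ?_
  · refine J.subset_mem hA fun z hz hfin => hz ((hfin.preimage hG.injOn).subset ?_)
    rintro y ⟨⟨hyA, hyE⟩, rfl⟩
    exact ⟨hyA, hGP y hyE⟩
  · by_cases hyE : y ∈ E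
    · exact Or.inl hyE
    · exact Or.inr ⟨hy, hyE⟩

theorem exists_selfMap_infinite_fibers [Countable Z] {S : Set Z} (hS : S.Infinite) :
    ∃ ρ : Z → Z, (∀ z ∉ S, ρ z = z) ∧ ∀ z, (S ∩ ρ ⁻¹' {z}).Infinite := by
  classical
  have := hS.to_subtype
  have : Nonempty Z := hS.nonempty.to_subtype.map Subtype.val
  obtain ⟨e⟩ : Nonempty (S ≃ Z × ℕ) := nonempty_equiv_of_countable
  refine ⟨fun z => if h : z ∈ S then (e ⟨z, h⟩).1 else z, fun z hz => dif_neg hz, fun z => ?_⟩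
  refine infinite_of_injective_forall_mem (f := fun j => (e.symm (z, j) : Z))
    (fun i j h => (Prod.ext_iff.1 (e.symm.injective (Subtype.ext h))).2) fun j => ?_
  simp

theorem IsFubiniFinReduction.exists_infinite_fibers [Countable Z] (hφ : IsFubiniFinReduction J I φ)
    {S : Set Z} (hS : S ∈ J.sets) (hSinf : S.Infinite) (hSφ : S ⊆ range φ) :
    ∃ φ' : Y → Z, IsFubiniFinReduction J I φ' ∧ ∀ z, (φ' ⁻¹' {z}).Infinite := by
  obtain ⟨ρ, hρS, hρ⟩ := exists_selfMap_infinite_fibers hSinf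
  refine ⟨ρ ∘ φ, hφ.comp fun T hT => J.subset_mem (J.union_mem hT hS) fun z hz => ?_, fun z => ?_⟩
  · by_cases hzS : z ∈ S
    · exact Or.inr hzS
    · exact Or.inl (hρS z hzS ▸ hz)
  · exact ((hρ z).preimage (inter_subset_left.trans hSφ)).mono fun y hy => hy.2

theorem exists_equiv_of_fibers_infinite [Countable Y] [Countable W] {φ : Y → Z} {ψ : W → Z}
    (hφ : ∀ z, (φ ⁻¹' {z}).Infinite) (hψ : ∀ z, (ψ ⁻¹' {z}).Infinite) :
    ∃ G : Y ≃ W, ∀ y, ψ (G y) = φ y := by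
  have e : ∀ z, Nonempty ({y // φ y = z} ≃ {w // ψ w = z}) := fun z =>
    have : Infinite {y // φ y = z} := (hφ z).to_subtype
    have : Infinite {w // ψ w = z} := (hψ z).to_subtype
    nonempty_equiv_of_countable
  exact ⟨Equiv.ofFiberEquiv fun z => (e z).some, Equiv.ofFiberEquiv_map _⟩

end Reductions

section Characterization

variable {Y : Type*} {I : IdealOn Y}

theorem exists_bijective_katetov_finPow_zero [Countable Y] :
    ∃ G : Y → Fin 1 → ℕ, Bijective G ∧ IsKatetovReduction (FinPow 0) I G := by
  have := I.infinite
  obtain ⟨e⟩ : Nonempty (Y ≃ (Fin 1 → ℕ)) := nonempty_equiv_of_countable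
  exact ⟨e, e.bijective, fun A hA => I.finite_mem _ (hA.preimage e.injective.injOn)⟩

theorem exists_bijective_katetov_finPow_succ [Countable Y] {n : ℕ} {f : Y → Fin (n + 3) → ℕ}
    (hf : IsKatetovReduction (FinPow (n + 2)) I f) :
    ∃ G : Y → Fin (n + 2) → ℕ, Bijective G ∧ IsKatetovReduction (FinPow (n + 1)) I G := by
  have hφ := IsFubiniFinReduction.of_katetov_succ hf
  have hrange : (range (Fin.init ∘ f)).Infinite := fun h => hφ.range_not_mem (finPow_of_finite h)
  obtain ⟨S, hSφ, hSinf, hS⟩ := exists_infinite_subset_mem_finPow hrange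
  obtain ⟨φ', hφ', hφ'fib⟩ := hφ.exists_infinite_fibers hS hSinf hSφ
  obtain ⟨G, hG⟩ := exists_equiv_of_fibers_infinite hφ'fib collapseLast_fiber_infinite
  exact ⟨G, G.bijective, fun A hA => hφ'.preimage_mem G.injective (I.finite_mem ∅ finite_empty)
    (fun y _ => hG y) (finPow_infinite_fibers_of_init init_collapseLast hA)⟩

theorem exists_bijective_katetov_finPow [Countable Y]
    (hd : ∀ n, ∃ f : Y → Fin (n + 1) → ℕ, IsKatetovReduction (FinPow n) I f) :
    ∀ n, ∃ G : Y → Fin (n + 1) → ℕ, Bijective G ∧ IsKatetovReduction (FinPow n) I G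
  | 0 => exists_bijective_katetov_finPow_zero
  | _ + 1 => let ⟨_, hf⟩ := hd _; exists_bijective_katetov_finPow_succ hf

theorem finPowCopy_preimage_mem {n : ℕ} {P : (Fin (n + 1) → ℕ) → Set ℕ}
    (hP : ∀ s t, s ≠ t → Disjoint (P s) (P t)) {c : ℕ → Fin (n + 1) → ℕ} (hc : ∀ m, m ∈ P (c m))
    {A : Set (Fin (n + 1) → ℕ)} (hA : A ∈ FinPow n) : c ⁻¹' A ∈ FinPowCopy P := by
  refine finPow_mono hA fun s hs => ?_
  obtain ⟨m, hmA, hms⟩ := Set.Infinite.nonempty hs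
  by_cases hcs : c m = s
  · exact hcs ▸ hmA
  · exact absurd hms (disjoint_left.1 (hP _ _ hcs) (hc m))

theorem mem_finOmega'_of_mem_finPowCopy {X : (n : ℕ) → (Fin (n + 1) → ℕ) → Set ℕ} {n : ℕ}
    {B : Set ℕ} (hB : B ∈ FinPowCopy (X n)) : B ∈ FinOmega' X :=
  ⟨{n}, fun _ => B, by simpa using hB, by simp⟩

theorem exists_katetov_finPow_of_finOmega' {X : (n : ℕ) → (Fin (n + 1) → ℕ) → Set ℕ}
    (hX : PartitionSystem X) {f : Y → ℕ} (hf : IsKatetovReduction (FinOmega' X) I f) (n : ℕ) :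
    ∃ g : Y → Fin (n + 1) → ℕ, IsKatetovReduction (FinPow n) I g := by
  choose c hc using fun m => mem_iUnion.1 (hX.cover n ▸ mem_univ m : m ∈ ⋃ s, X n s)
  exact ⟨c ∘ f, fun A hA =>
    hf _ (mem_finOmega'_of_mem_finPowCopy (finPowCopy_preimage_mem (hX.disjoint n) hc hA))⟩

theorem exists_infinite_mem_of_bijective {n : ℕ} {w : Y → Fin (n + 2) → ℕ} (hw : Bijective w)
    (hwI : IsKatetovReduction (FinPow (n + 1)) I w) : ∃ R ∈ I.sets, R.Infinite := by
  refine ⟨w ⁻¹' (Fin.init ⁻¹' {0}),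
    hwI _ (finPow_preimage_init (finPow_of_finite (finite_singleton 0))),
    Infinite.preimage ?_ (by simp [hw.2.range_eq])⟩
  exact infinite_of_injective_forall_mem (Fin.snoc_right_injective 0) fun j => by
    simp [Fin.init_snoc]

theorem exists_equiv_nat_mem_pieces {X : (n : ℕ) → (Fin (n + 1) → ℕ) → Set ℕ}
    (hcross : ∀ (F : Finset ℕ) (s : ∀ i : ℕ, Fin (i + 1) → ℕ), (⋂ i ∈ F, X i (s i)).Infinite)
    [Countable Y] (g : ∀ n, Y → Fin (n + 1) → ℕ) {R : Set Y} (hR : R ∈ I.sets)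
    (hRinf : R.Infinite) :
    ∃ F : Y ≃ ℕ, ∀ n, ∃ E ∈ I.sets, ∀ y ∉ E, F y ∈ X n (g n y) := by
  have hRc : Rᶜ.Infinite := fun h =>
    I.univ_not_mem (union_compl_self R ▸ I.union_mem hR (I.finite_mem _ h))
  have := hRc.to_subtype
  obtain ⟨a⟩ : Nonempty (ℕ ≃ ↥Rᶜ) := nonempty_equiv_of_countable
  have ha : range (Subtype.val ∘ a) = Rᶜ := by
    rw [range_comp, a.range_eq_univ, image_univ, Subtype.range_coe]
  obtain ⟨v, hv, hvC, hvc⟩ := exists_injective_mem_coinfinite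
    (C := fun j => ⋂ i ∈ Finset.range (j + 1), X i (g i (a j))) fun j => hcross _ _
  obtain ⟨F, hF⟩ := exists_equiv_extend (Subtype.val_injective.comp a.injective) hv
    (by rwa [ha, compl_compl]) hvc
  refine ⟨F, fun n => ⟨R ∪ (Subtype.val ∘ a) '' Iio n,
    I.union_mem hR (I.finite_mem _ ((finite_Iio n).image _)), fun y hy => ?_⟩⟩
  obtain ⟨j, rfl⟩ : y ∈ range (Subtype.val ∘ a) := by rw [ha]; exact fun h => hy (Or.inl h)
  have hnj : n < j + 1 := Nat.lt_succ_of_le (not_lt.1 fun h => hy (Or.inr ⟨j, h, rfl⟩))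
  rw [hF]
  exact mem_iInter₂.1 (hvC j) n (Finset.mem_range.2 hnj)

theorem exists_bijective_katetov_finOmega' {X : (n : ℕ) → (Fin (n + 1) → ℕ) → Set ℕ}
    (hX : PartitionSystem X) [Countable Y]
    (hc : ∀ n, ∃ w : Y → Fin (n + 1) → ℕ, Bijective w ∧ IsKatetovReduction (FinPow n) I w) :
    ∃ F : Y → ℕ, Bijective F ∧ IsKatetovReduction (FinOmega' X) I F := by
  choose w hwbij hw using hc
  obtain ⟨R, hR, hRinf⟩ := exists_infinite_mem_of_bijective (hwbij 1) (hw 1)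
  obtain ⟨F, hF⟩ := exists_equiv_nat_mem_pieces hX.cross (fun n => Fin.init ∘ w (n + 1)) hR hRinf
  refine ⟨F, F.bijective, fun A ⟨N, B, hB, hAB⟩ => I.subset_mem ?_ (preimage_mono hAB)⟩
  rw [preimage_iUnion₂]
  refine I.biUnion_mem N fun n hn => ?_
  obtain ⟨E, hE, hEF⟩ := hF n
  exact (IsFubiniFinReduction.of_katetov_succ (hw (n + 1))).preimage_mem F.injective hE hEF
    (hB n hn)

end Characterization

/-- For every ideal `I` on a countable set, the following are
equivalent: (a) `Fin'_ω ⊑ I`; (b) `Fin'_ω ≤_K I`; (c) `Fin^{n+1} ⊑ I` for all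
`n`; (d) `Fin^{n+1} ≤_K I` for all `n`. -/
theorem finOmega'_characterization (X : (n : ℕ) → (Fin (n + 1) → ℕ) → Set ℕ)
    (hX : PartitionSystem X) {Y : Type*} [Countable Y] (I : IdealOn Y) :
    ((∃ f : Y → ℕ, Function.Bijective f ∧ ∀ A ∈ FinOmega' X, f ⁻¹' A ∈ I.sets) ↔
      (∃ f : Y → ℕ, ∀ A ∈ FinOmega' X, f ⁻¹' A ∈ I.sets)) ∧
    ((∃ f : Y → ℕ, ∀ A ∈ FinOmega' X, f ⁻¹' A ∈ I.sets) ↔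
      (∀ n : ℕ, ∃ f : Y → (Fin (n + 1) → ℕ), Function.Bijective f ∧
        ∀ A ∈ FinPow n, f ⁻¹' A ∈ I.sets)) ∧
    ((∀ n : ℕ, ∃ f : Y → (Fin (n + 1) → ℕ), Function.Bijective f ∧
        ∀ A ∈ FinPow n, f ⁻¹' A ∈ I.sets) ↔
      (∀ n : ℕ, ∃ f : Y → (Fin (n + 1) → ℕ), ∀ A ∈ FinPow n, f ⁻¹' A ∈ I.sets)) := by
  have hbc : (∃ f : Y → ℕ, IsKatetovReduction (FinOmega' X) I f) →
      ∀ n, ∃ G : Y → Fin (n + 1) → ℕ, Bijective G ∧ IsKatetovReduction (FinPow n) I G :=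
    fun ⟨_, hf⟩ => exists_bijective_katetov_finPow (exists_katetov_finPow_of_finOmega' hX hf)
  have hca := exists_bijective_katetov_finOmega' hX (I := I)
  exact ⟨⟨fun ha => ha.imp fun _ hf => hf.2, fun hb => hca (hbc hb)⟩,
    ⟨hbc, fun hc => (hca hc).imp fun _ hf => hf.2⟩,
    ⟨fun hc n => (hc n).imp fun _ hf => hf.2, exists_bijective_katetov_finPow⟩⟩
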